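/- arXiv:2605.10414 — 2 statements merged into one kernel-verified Lean document; each statement's English description precedes it below -/
import Mathlib

section
/- Under the hypotheses of the unprotected-mass bound (|s_{i,m}| ≤ S_max, unprotected masks M_{i,k} = C·k, current-token mask M_{i,i} = C·i, C = Γ g_i / T), define the effective context length Δ^{eff,p}_i = (T / (Γ g_i)) · (2 S_max + log(|U|/p)) for a tolerance p ∈ (0,1). Then every unprotected token k with i − k ≥ Δ^{eff,p}_i satisfies, collectively, Σ_{k∈U, i−k ≥ Δ^{eff,p}_i} α_{i,k} ≤ p. -/
/-!
Each softmax weight is at most `exp` of its logit minus the logit of the current token,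
since that token's term alone already lies in the normaliser. Beyond the effective context
length the mask gap `C (i - k)` exceeds the worst semantic gap `2 S_max` by `log (|U| / p)`,
so every far unprotected weight is at most `p / |U|`, and there are at most `|U|` of them.
-/

open Finset Real

lemma exp_div_sum_exp_le_exp_sub {ι : Type*} (S : Finset ι) (a : ι → ℝ) {j : ι}
    (hj : j ∈ S) (k : ι) : exp (a k) / ∑ m ∈ S, exp (a m) ≤ exp (a k - a j) := by
  rw [exp_sub]
  gcongr
  exact single_le_sum (f := fun m => exp (a m)) (fun m _ => (exp_pos _).le) hj

lemma sum_filter_le_of_le_div_card {ι : Type*} {U : Finset ι} {P : ι → Prop}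
    [DecidablePred P] {f : ι → ℝ} {p : ℝ} (hp : 0 ≤ p)
    (h : ∀ k ∈ U, P k → f k ≤ p / U.card) :
    ∑ k ∈ U.filter P, f k ≤ p := by
  calc ∑ k ∈ U.filter P, f k ≤ (U.filter P).card * (p / U.card) := by
        simpa using sum_le_card_nsmul _ _ _ fun k hk =>
          h k (mem_filter.mp hk).1 (mem_filter.mp hk).2
    _ ≤ U.card * (p / U.card) := by gcongr; exact filter_subset P U
    _ ≤ p := by
        rcases U.eq_empty_or_nonempty with rfl | hU
        · simpa using hp
        · rw [mul_div_cancel₀ _ (Nat.cast_ne_zero.mpr hU.card_pos.ne')]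

lemma masked_logit_sub_le_of_inv_mul_le {C S L x y sx sy : ℝ} (hC : 0 < C) (hx : |sx| ≤ S)
    (hy : |sy| ≤ S) (hfar : C⁻¹ * (2 * S + L) ≤ y - x) :
    sx + C * x - (sy + C * y) ≤ -L := by
  rw [inv_mul_le_iff₀ hC] at hfar
  have := abs_le.mp hx
  have := abs_le.mp hy
  linarith

theorem gape_effective_context_length_general
    (i : ℕ) (Γ T g Smax p : ℝ) (hΓ : 0 < Γ) (hT : 0 < T) (hg : 0 < g)
    (hp0 : 0 < p)
    (s M : ℕ → ℝ)
    (hs : ∀ m ≤ i, |s m| ≤ Smax)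
    (U : Finset ℕ) (hU : U ⊆ Finset.range i)
    (hMU : ∀ k ∈ U, M k = (Γ * g / T) * k)
    (hMi : M i = (Γ * g / T) * i)
    (α : ℕ → ℝ)
    (hα : ∀ k, α k = Real.exp (s k + M k) /
        ∑ m ∈ Finset.range (i + 1), Real.exp (s m + M m)) :
    ∑ k ∈ U.filter
        (fun k : ℕ => (T / (Γ * g)) * (2 * Smax + Real.log ((U.card : ℝ) / p))
          ≤ (i : ℝ) - (k : ℝ)), α k ≤ p := by
  refine sum_filter_le_of_le_div_card hp0.le fun k hk hfar => ?_
  have hki : k < i := mem_range.mp (hU hk)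
  have hUpos : (0 : ℝ) < U.card := Nat.cast_pos.mpr (card_pos.mpr ⟨k, hk⟩)
  have hgap : s k + M k - (s i + M i) ≤ -log (U.card / p) := by
    rw [hMU k hk, hMi]
    rw [← inv_div] at hfar
    exact masked_logit_sub_le_of_inv_mul_le (by positivity) (hs k hki.le) (hs i le_rfl) hfar
  calc α k ≤ exp (s k + M k - (s i + M i)) := by
        rw [hα]
        exact exp_div_sum_exp_le_exp_sub _ (fun m => s m + M m) (self_mem_range_succ i) k
    _ ≤ exp (-log (U.card / p)) := exp_le_exp.mpr hgap
    _ = p / U.card := by rw [exp_neg, exp_log (by positivity), inv_div]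

/-- the collective attention mass of unprotected tokens beyond the
effective context length `Δ^{eff,p} = (T/(Γ g))(2 S_max + log(|U|/p))` is at most `p`. -/
theorem gape_effective_context_length
    (i : ℕ) (Γ T g Smax p : ℝ) (hΓ : 0 < Γ) (hT : 0 < T) (hg : 0 < g)
    (hp0 : 0 < p) (hp1 : p < 1)
    (s M : ℕ → ℝ)
    (hs : ∀ m ≤ i, |s m| ≤ Smax)
    (U : Finset ℕ) (hU : U ⊆ Finset.range i)
    (hMU : ∀ k ∈ U, M k = (Γ * g / T) * k)
    (hMi : M i = (Γ * g / T) * i)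
    (α : ℕ → ℝ)
    (hα : ∀ k, α k = Real.exp (s k + M k) /
        ∑ m ∈ Finset.range (i + 1), Real.exp (s m + M m)) :
    ∑ k ∈ U.filter
        (fun k : ℕ => (T / (Γ * g)) * (2 * Smax + Real.log ((U.card : ℝ) / p))
          ≤ (i : ℝ) - (k : ℝ)), α k ≤ p :=
  gape_effective_context_length_general i Γ T g Smax p hΓ hT hg hp0 s M hs U hU hMU hMi α hα
end

section
/- (Eviction horizon.) Assume |s_{i,m}| ≤ S_max for all m (so the maximal semantic differential is 2 S_max) and g_i ≥ ε > 0. If a token at position k < i has landmark gate l_k < 1 and distance i − k > Δ_elim(l_k) := 2 S_max T / (Γ ε (1 − l_k)), then retrieval a_{i,k} > a_{i,i} is impossible: for all admissible semantic scores one has a_{i,k} ≤ a_{i,i}. In particular, an unprotected needle (l_k = 0) at relative depth ρ = k/i cannot be retrieved once i ≥ i_fail := 2 S_max T / (Γ g_i (1−ρ)); and for i ≥ i_fail, retrieval requires l_k > 1 − 2 S_max T / (Γ g_i · i · (1−ρ)). -/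
/-!
The mask gives the diagonal an advantage over position `k` equal to the structural penalty
`(Γ g / T)(i - k)(1 - l_k)`, while bounded semantic scores can differ by at most `2 S_max`.
Each of the three claims is this comparison after rewriting its threshold as a bound on the
penalty, using `g ≥ ε` for the horizon and `i (1 - k/i) = i - k` for the failure length.
-/

namespace GAPE

noncomputable def structuralPenalty (Γ g T i k l : ℝ) : ℝ := Γ * g / T * ((i - k) * (1 - l))

lemma sub_le_two_mul_of_abs_le {a b S : ℝ} (ha : |a| ≤ S) (hb : |b| ≤ S) : a - b ≤ 2 * S := by
  linarith [(abs_le.mp ha).2, (abs_le.mp hb).1]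

lemma add_le_add_of_two_mul_le_sub {s s' M M' S : ℝ} (hs : |s| ≤ S) (hs' : |s'| ≤ S)
    (hM : 2 * S ≤ M' - M) : s + M ≤ s' + M' := by
  linarith [sub_le_two_mul_of_abs_le hs hs']

lemma mul_one_sub_div_self {i k : ℝ} (hi : i ≠ 0) : i * (1 - k / i) = i - k := by
  field_simp

variable {Γ T g S i k l : ℝ}

lemma two_mul_lt_structuralPenalty_of_horizon_lt {ε : ℝ} (hΓ : 0 < Γ) (hT : 0 < T)
    (hε : 0 < ε) (hgε : ε ≤ g) (hl : l < 1) (hik : 0 < i - k)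
    (h : 2 * S * T / (Γ * ε * (1 - l)) < i - k) :
    2 * S < structuralPenalty Γ g T i k l := by
  have hl' : 0 < 1 - l := sub_pos.mpr hl
  rw [div_lt_iff₀ (by positivity)] at h
  have hεg : Γ * ε * ((i - k) * (1 - l)) ≤ Γ * g * ((i - k) * (1 - l)) := by gcongr
  rw [structuralPenalty, div_mul_eq_mul_div, lt_div_iff₀ hT]
  linarith

lemma two_mul_le_structuralPenalty_of_failLength_le (hΓ : 0 < Γ) (hT : 0 < T) (hg : 0 < g)
    (hi : 0 < i) (hk : k < i) (h : 2 * S * T / (Γ * g * (1 - k / i)) ≤ i) :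
    2 * S ≤ structuralPenalty Γ g T i k 0 := by
  have hki : 0 < 1 - k / i := by rw [sub_pos, div_lt_one hi]; exact hk
  have hden : i * (Γ * g * (1 - k / i)) = Γ * g * (i - k) := by
    rw [mul_left_comm, mul_one_sub_div_self hi.ne']
  rw [div_le_iff₀ (by positivity), hden] at h
  rw [structuralPenalty, sub_zero, mul_one, div_mul_eq_mul_div, le_div_iff₀ hT]
  linarith

lemma lt_of_structuralPenalty_lt (hΓ : 0 < Γ) (hT : 0 < T) (hg : 0 < g) (hi : 0 < i)
    (hk : k < i) (h : structuralPenalty Γ g T i k l < 2 * S) :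
    1 - 2 * S * T / (Γ * g * i * (1 - k / i)) < l := by
  have hik : 0 < i - k := sub_pos.mpr hk
  rw [structuralPenalty, div_mul_eq_mul_div, div_lt_iff₀ hT] at h
  rw [mul_assoc (Γ * g), mul_one_sub_div_self hi.ne', sub_lt_comm, lt_div_iff₀ (by positivity)]
  linarith

end GAPE

open GAPE in
theorem gape_eviction_horizon_general
    (i k : ℝ) (hi : 0 < i) (hk : k < i)
    (Γ T g ε Smax : ℝ) (hΓ : 0 < Γ) (hT : 0 < T) (hε : 0 < ε) (hgε : ε ≤ g)
    (lk : ℝ) (hlk1 : lk < 1)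
    (sik sii : ℝ) (hsik : |sik| ≤ Smax) (hsii : |sii| ≤ Smax)
    (Mik Mii : ℝ)
    (hMik : Mik = (Γ * g / T) * (k * (1 - lk) + i * lk))
    (hMii : Mii = (Γ * g / T) * i) :
    (i - k > 2 * Smax * T / (Γ * ε * (1 - lk)) → sik + Mik ≤ sii + Mii) ∧
    (lk = 0 → i ≥ 2 * Smax * T / (Γ * g * (1 - k / i)) → sik + Mik ≤ sii + Mii) ∧
    (sik + Mik > sii + Mii →
      lk > 1 - 2 * Smax * T / (Γ * g * i * (1 - k / i))) := by
  have hg : 0 < g := hε.trans_le hgε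
  have hgap : Mii - Mik = structuralPenalty Γ g T i k lk := by
    rw [hMii, hMik, structuralPenalty]; ring
  refine ⟨fun h ↦ ?_, fun hl0 h ↦ ?_, fun h ↦ ?_⟩
  · refine add_le_add_of_two_mul_le_sub hsik hsii (hgap ▸ le_of_lt ?_)
    exact two_mul_lt_structuralPenalty_of_horizon_lt hΓ hT hε hgε hlk1 (sub_pos.mpr hk) h
  · subst hl0
    exact add_le_add_of_two_mul_le_sub hsik hsii
      (hgap ▸ two_mul_le_structuralPenalty_of_failLength_le hΓ hT hg hi hk h)
  · refine lt_of_structuralPenalty_lt hΓ hT hg hi hk (hgap ▸ ?_)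
    by_contra! hle
    exact absurd (add_le_add_of_two_mul_le_sub hsik hsii hle) (not_le.mpr h)

/-- eviction horizon: beyond the distance `Δ_elim(l_k)` retrieval of a
non-fully-protected token is impossible; an unprotected needle fails once the sequence
length reaches `i_fail`; and for long sequences retrieval forces a large landmark gate. -/
theorem gape_eviction_horizon
    (i k : ℝ) (hi : 0 < i) (hk : k < i)
    (Γ T g ε Smax : ℝ) (hΓ : 0 < Γ) (hT : 0 < T) (hε : 0 < ε) (hgε : ε ≤ g)
    (lk : ℝ) (hlk0 : 0 ≤ lk) (hlk1 : lk < 1)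
    (sik sii : ℝ) (hsik : |sik| ≤ Smax) (hsii : |sii| ≤ Smax)
    (Mik Mii : ℝ)
    (hMik : Mik = (Γ * g / T) * (k * (1 - lk) + i * lk))
    (hMii : Mii = (Γ * g / T) * i) :
    (i - k > 2 * Smax * T / (Γ * ε * (1 - lk)) → sik + Mik ≤ sii + Mii) ∧
    (lk = 0 → i ≥ 2 * Smax * T / (Γ * g * (1 - k / i)) → sik + Mik ≤ sii + Mii) ∧
    (sik + Mik > sii + Mii →
      lk > 1 - 2 * Smax * T / (Γ * g * i * (1 - k / i))) :=
  gape_eviction_horizon_general i k hi hk Γ T g ε Smax hΓ hT hε hgε lk hlk1 sik sii hsik hsii Mik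
    Mii hMik hMii
end
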